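/- arXiv:2107.11761 — 2 statements merged into one kernel-verified Lean document; each statement's English description precedes it below -/
import Mathlib

section
/- For u in the Schwartz class on ℝ and λ ∈ ℝ, on the set {x : u(x) > λ} one has the pointwise inequality Λ^α u(x) ≥ Λ^α (u−λ)_+ (x), where Λ^α v(x) = C_α P.V. ∫_ℝ (v(x)−v(y))/|x−y|^{1+α} dy with 0 < α < 2. -/
/-! On `{u > λ}` the two truncated integrands compare pointwise: `(u - λ)₊(x) = u(x) - λ` while
`(u - λ)₊(y) ≥ u(y) - λ`, so `(u - λ)₊(x) - (u - λ)₊(y) ≤ u(x) - u(y)`. Both integrands are bounded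
numerators against the kernel `|x - y|^{-(1+α)}`, which is integrable away from the diagonal, so the
truncated integrals compare for every `δ > 0`, and the inequality passes to the limit `δ → 0⁺`. -/

open Filter Set MeasureTheory

lemma Real.rpow_neg_le_mul_one_add_rpow_neg {δ t p : ℝ} (hδ : 0 < δ) (hδt : δ ≤ t) (hp : 0 ≤ p) :
    t ^ (-p) ≤ ((1 + δ) / δ) ^ p * (1 + t) ^ (-p) := by
  have ht : 0 < t := hδ.trans_le hδt
  have hle : 1 + t ≤ (1 + δ) / δ * t := by
    rw [div_mul_eq_mul_div, le_div_iff₀ hδ]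
    nlinarith
  calc t ^ (-p) = ((1 + δ) / δ) ^ p * ((1 + δ) / δ * t) ^ (-p) := by
        rw [Real.mul_rpow (by positivity) ht.le, Real.rpow_neg (x := (1 + δ) / δ) (by positivity),
          mul_inv_cancel_left₀ (by positivity)]
    _ ≤ ((1 + δ) / δ) ^ p * (1 + t) ^ (-p) :=
        mul_le_mul_of_nonneg_left
          (Real.rpow_le_rpow_of_nonpos (by positivity) hle (neg_nonpos.mpr hp)) (by positivity)

section
variable {E : Type*} [NormedAddCommGroup E] [NormedSpace ℝ E] [FiniteDimensional ℝ E]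
  [MeasurableSpace E] [BorelSpace E] {μ : Measure E} [μ.IsAddHaarMeasure]

theorem integrableOn_norm_sub_rpow_neg (x : E) {p δ : ℝ} (hp : (Module.finrank ℝ E : ℝ) < p)
    (hδ : 0 < δ) : IntegrableOn (fun y ↦ ‖x - y‖ ^ (-p)) {y | δ < ‖x - y‖} μ := by
  have hmajorant : Integrable (fun y ↦ ((1 + δ) / δ) ^ p * (1 + ‖x - y‖) ^ (-p)) μ :=
    ((integrable_one_add_norm hp).comp_sub_left x).const_mul _
  refine hmajorant.integrableOn.mono' (Measurable.aestronglyMeasurable (by fun_prop)) ?_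
  rw [ae_restrict_iff' (measurableSet_lt measurable_const (by fun_prop))]
  refine ae_of_all _ fun y (hy : δ < ‖x - y‖) ↦ ?_
  rw [Real.norm_of_nonneg (by positivity)]
  exact Real.rpow_neg_le_mul_one_add_rpow_neg hδ hy.le ((Nat.cast_nonneg _).trans hp.le)

theorem integrableOn_div_norm_sub_rpow {v : E → ℝ} (hv : AEStronglyMeasurable v μ) {K : ℝ}
    (hK : ∀ y, |v y| ≤ K) (x : E) {p δ : ℝ} (hp : (Module.finrank ℝ E : ℝ) < p) (hδ : 0 < δ) :
    IntegrableOn (fun y ↦ v y / ‖x - y‖ ^ p) {y | δ < ‖x - y‖} μ := by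
  refine ((integrableOn_norm_sub_rpow_neg x hp hδ).const_mul K).mono'
    (hv.restrict.div₀ (Measurable.aestronglyMeasurable (by fun_prop))) ?_
  rw [ae_restrict_iff' (measurableSet_lt measurable_const (by fun_prop))]
  refine ae_of_all _ fun y (hy : δ < ‖x - y‖) ↦ ?_
  rw [Real.norm_eq_abs, abs_div, abs_of_pos (Real.rpow_pos_of_pos (hδ.trans hy) p),
    Real.rpow_neg (norm_nonneg _), div_eq_mul_inv]
  gcongr
  exact hK y

theorem max_sub_max_le_sub {lam a : ℝ} (ha : lam < a) (b : ℝ) :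
    max (a - lam) 0 - max (b - lam) 0 ≤ a - b := by
  rw [max_eq_left (sub_nonneg.mpr ha.le)]
  linarith [le_max_left (b - lam) 0]

theorem setIntegral_max_sub_div_norm_sub_rpow_le {u : E → ℝ} (hu : AEStronglyMeasurable u μ)
    {M : ℝ} (hM : ∀ y, |u y| ≤ M) {lam : ℝ} {x : E} (hx : lam < u x) {p δ : ℝ}
    (hp : (Module.finrank ℝ E : ℝ) < p) (hδ : 0 < δ) :
    ∫ y in {y | δ < ‖x - y‖}, (max (u x - lam) 0 - max (u y - lam) 0) / ‖x - y‖ ^ p ∂μ ≤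
      ∫ y in {y | δ < ‖x - y‖}, (u x - u y) / ‖x - y‖ ^ p ∂μ := by
  have hdiff : ∀ y, |u x - u y| ≤ |u x| + M := fun y ↦ (abs_sub _ _).trans (by linarith [hM y])
  have hposPart : ∀ y, |max (u x - lam) 0 - max (u y - lam) 0| ≤ |u x| + M := fun y ↦
    (abs_max_sub_max_le_abs _ _ 0).trans (by rw [sub_sub_sub_cancel_right]; exact hdiff y)
  refine setIntegral_mono_on
    (integrableOn_div_norm_sub_rpow (by fun_prop) hposPart x hp hδ)
    (integrableOn_div_norm_sub_rpow (by fun_prop) hdiff x hp hδ)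
    (measurableSet_lt measurable_const (by fun_prop)) fun y (hy : δ < ‖x - y‖) ↦ ?_
  exact div_le_div_of_nonneg_right (max_sub_max_le_sub hx _) (by positivity)

end

theorem stmt6_general (α : ℝ) (hα0 : 0 < α)
    (Cα : ℝ) (hC : 0 < Cα) (u : SchwartzMap ℝ ℝ) (lam x : ℝ)
    (hx : lam < u x) (A B : ℝ)
    (hA : Tendsto
      (fun δ : ℝ => ∫ y in {y : ℝ | δ < |x - y|},
        (u x - u y) / |x - y| ^ (1 + α))
      (nhdsWithin 0 (Ioi 0)) (nhds A))
    (hB : Tendsto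
      (fun δ : ℝ => ∫ y in {y : ℝ | δ < |x - y|},
        (max (u x - lam) 0 - max (u y - lam) 0) / |x - y| ^ (1 + α))
      (nhdsWithin 0 (Ioi 0)) (nhds B)) :
    Cα * B ≤ Cα * A := by
  have hM : ∀ y, |u y| ≤ ‖u.toBoundedContinuousFunction‖ := fun y ↦ by
    simpa using u.toBoundedContinuousFunction.norm_coe_le_norm y
  have hp : (Module.finrank ℝ ℝ : ℝ) < 1 + α := by simpa using hα0
  simp only [← Real.norm_eq_abs] at hA hB
  have hBA : B ≤ A := le_of_tendsto_of_tendsto hB hA <| eventually_mem_nhdsWithin.mono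
    fun δ hδ ↦ setIntegral_max_sub_div_norm_sub_rpow_le u.continuous.aestronglyMeasurable hM hx hp hδ
  exact mul_le_mul_of_nonneg_left hBA hC.le

/-- For `u` Schwartz on `ℝ`, `λ ∈ ℝ`, `0 < α < 2`, and a point
`x` with `u(x) > λ`: if the principal-value integrals defining
`Λ^α u (x)` and `Λ^α (u−λ)_+ (x)` (with normalizing constant `C_α > 0`)
converge to `A` and `B` respectively, then `Λ^α u(x) ≥ Λ^α (u−λ)_+(x)`,
i.e. `C_α · A ≥ C_α · B`. -/
theorem stmt6 (α : ℝ) (hα0 : 0 < α) (hα2 : α < 2)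
    (Cα : ℝ) (hC : 0 < Cα) (u : SchwartzMap ℝ ℝ) (lam x : ℝ)
    (hx : lam < u x) (A B : ℝ)
    (hA : Tendsto
      (fun δ : ℝ => ∫ y in {y : ℝ | δ < |x - y|},
        (u x - u y) / |x - y| ^ (1 + α))
      (nhdsWithin 0 (Ioi 0)) (nhds A))
    (hB : Tendsto
      (fun δ : ℝ => ∫ y in {y : ℝ | δ < |x - y|},
        (max (u x - lam) 0 - max (u y - lam) 0) / |x - y| ^ (1 + α))
      (nhdsWithin 0 (Ioi 0)) (nhds B)) :
    Cα * B ≤ Cα * A :=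
  stmt6_general α hα0 Cα hC u lam x hx A B hA hB
end

section
/- Let (E_n)_{n≥0} be a sequence of nonnegative reals satisfying E_n ≤ C·2^{3n}·E_{n−1}² + C·2^{4n}·E_{n−1}^{3/2} for all n ≥ 1, where C > 0. If E_0 is sufficiently small (depending only on C), then E_n → 0 as n → ∞. -/
open Filter Real

/-! If `E_n ≤ d ρ^n`, each term `c λ^{n+1} E_n^p` with `p > 1` is at most `c λ d^{p-1} · d ρ^n`
as long as `λ ρ^{p-1} ≤ 1`: the superlinear power absorbs the exponential growth of the
coefficient. Hence for `d` small the bound `E_n ≤ d ρ^n` propagates by induction, and with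
`ρ < 1` this forces `E_n → 0`. For the theorem `ρ = 1/256` works. -/

lemma mul_pow_mul_rpow_le {c a ρ d x p : ℝ} (n : ℕ) (hc : 0 ≤ c) (ha : 0 ≤ a) (hρ : 0 ≤ ρ)
    (hd : 0 ≤ d) (hx : 0 ≤ x) (hp : 1 ≤ p) (haρ : a * ρ ^ (p - 1) ≤ 1) (hxd : x ≤ d * ρ ^ n) :
    c * a ^ (n + 1) * x ^ p ≤ c * a * d ^ (p - 1) * (d * ρ ^ n) := by
  have hx_pow : x ^ p ≤ d ^ (p - 1) * (ρ ^ (p - 1)) ^ n * (d * ρ ^ n) :=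
    calc x ^ p ≤ (d * ρ ^ n) ^ p := rpow_le_rpow hx hxd (by linarith)
      _ = (d * ρ ^ n) ^ (p - 1) * (d * ρ ^ n) := by
        conv_lhs => rw [← sub_add_cancel p 1]
        rw [rpow_add' (by positivity) (by linarith), rpow_one]
      _ = d ^ (p - 1) * (ρ ^ (p - 1)) ^ n * (d * ρ ^ n) := by
        rw [mul_rpow hd (by positivity), ← rpow_pow_comm hρ]
  have hgrowth : a ^ n * (ρ ^ (p - 1)) ^ n ≤ 1 := by
    rw [← mul_pow]
    exact pow_le_one₀ (by positivity) haρ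
  calc c * a ^ (n + 1) * x ^ p
      ≤ c * a ^ (n + 1) * (d ^ (p - 1) * (ρ ^ (p - 1)) ^ n * (d * ρ ^ n)) := by gcongr
    _ = c * a * d ^ (p - 1) * (d * ρ ^ n) * (a ^ n * (ρ ^ (p - 1)) ^ n) := by ring
    _ ≤ c * a * d ^ (p - 1) * (d * ρ ^ n) := by
        apply mul_le_of_le_one_right (by positivity) hgrowth

lemma le_mul_pow_of_le_rpow_add_rpow {E : ℕ → ℝ} {c a b p q ρ d : ℝ} (hE : ∀ n, 0 ≤ E n)
    (hrec : ∀ n, E (n + 1) ≤ c * a ^ (n + 1) * E n ^ p + c * b ^ (n + 1) * E n ^ q)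
    (hc : 0 ≤ c) (ha : 0 ≤ a) (hb : 0 ≤ b) (hρ : 0 ≤ ρ) (hd : 0 ≤ d) (hp : 1 ≤ p) (hq : 1 ≤ q)
    (haρ : a * ρ ^ (p - 1) ≤ 1) (hbρ : b * ρ ^ (q - 1) ≤ 1)
    (hsmall : c * a * d ^ (p - 1) + c * b * d ^ (q - 1) ≤ ρ) (h0 : E 0 ≤ d) :
    ∀ n, E n ≤ d * ρ ^ n := by
  intro n
  induction n with
  | zero => simpa using h0
  | succ n ih =>
    calc E (n + 1) ≤ c * a ^ (n + 1) * E n ^ p + c * b ^ (n + 1) * E n ^ q := hrec n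
      _ ≤ c * a * d ^ (p - 1) * (d * ρ ^ n) + c * b * d ^ (q - 1) * (d * ρ ^ n) :=
        add_le_add (mul_pow_mul_rpow_le n hc ha hρ hd (hE n) hp haρ ih)
          (mul_pow_mul_rpow_le n hc hb hρ hd (hE n) hq hbρ ih)
      _ = (c * a * d ^ (p - 1) + c * b * d ^ (q - 1)) * (d * ρ ^ n) := by ring
      _ ≤ ρ * (d * ρ ^ n) := by gcongr
      _ = d * ρ ^ (n + 1) := by ring

lemma sq_rpow_three_halves_sub_one {x : ℝ} (hx : 0 ≤ x) : (x ^ 2) ^ ((3 : ℝ) / 2 - 1) = x := by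
  rw [show (3 : ℝ) / 2 - 1 = 1 / 2 by norm_num, ← sqrt_eq_rpow, sqrt_sq hx]

/-- If `E_n ≥ 0` satisfies
`E_n ≤ C·2^{3n}·E_{n−1}² + C·2^{4n}·E_{n−1}^{3/2}` for `n ≥ 1` with `C > 0`,
then there is a threshold `δ(C) > 0` such that `E_0 ≤ δ` implies `E_n → 0`. -/
theorem stmt10 (C : ℝ) (hC : 0 < C) :
    ∃ δ : ℝ, 0 < δ ∧ ∀ E : ℕ → ℝ, (∀ n, 0 ≤ E n) →
      (∀ n, 1 ≤ n →
        E n ≤ C * 2 ^ (3 * n) * (E (n - 1)) ^ 2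
              + C * 2 ^ (4 * n) * (E (n - 1)) ^ ((3:ℝ) / 2)) →
      E 0 ≤ δ → Tendsto E atTop (nhds 0) := by
  set ε := min 1 (2 ^ 13 * C)⁻¹
  have hε : 0 < ε := lt_min one_pos (by positivity)
  have hCε : C * ε ≤ 2⁻¹ ^ 13 := calc
    C * ε ≤ C * (2 ^ 13 * C)⁻¹ := by gcongr; exact min_le_right _ _
    _ = 2⁻¹ ^ 13 := by field_simp
  refine ⟨ε ^ 2, by positivity, fun E hE hrec h0 => ?_⟩
  have hrec' : ∀ n, E (n + 1) ≤ C * 8 ^ (n + 1) * E n ^ (2 : ℝ)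
      + C * 16 ^ (n + 1) * E n ^ ((3 : ℝ) / 2) := fun n => by
    norm_num [pow_mul] at hrec ⊢
    exact hrec (n + 1) (by omega)
  have hsmall : C * 8 * (ε ^ 2) ^ ((2 : ℝ) - 1) + C * 16 * (ε ^ 2) ^ ((3 : ℝ) / 2 - 1)
      ≤ (16⁻¹) ^ 2 := by
    rw [sq_rpow_three_halves_sub_one hε.le, show (2 : ℝ) - 1 = 1 by norm_num, rpow_one]
    have hε_sq : C * ε * ε ≤ C * ε := mul_le_of_le_one_right (by positivity) (min_le_left _ _)
    nlinarith
  have hbound := le_mul_pow_of_le_rpow_add_rpow hE hrec' hC.le (by norm_num) (by norm_num)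
    (by positivity) (by positivity) (by norm_num) (by norm_num) (by norm_num)
    (by rw [sq_rpow_three_halves_sub_one (by norm_num)]; norm_num) hsmall h0
  have hgeom : Tendsto (fun n => ε ^ 2 * ((16 : ℝ)⁻¹ ^ 2) ^ n) atTop (nhds 0) := by
    simpa only [mul_zero] using (tendsto_pow_atTop_nhds_zero_of_lt_one
      (r := (16 : ℝ)⁻¹ ^ 2) (by positivity) (by norm_num)).const_mul (ε ^ 2)
  exact squeeze_zero hE hbound hgeom
end
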